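/- Consider a loop with variable valuations in a set S, a body update U : S → S satisfying U(s) ≠ s for all s, and an iteration condition ic : S → Prop. If the loop is terminating (every sequence s_0, s_1, ... with s_{i+1} = U(s_i) and ic(s_i) for all i is finite), then there is no infinite sequence (s_i) with s_{i+1} ∈ {s_i, U(s_i)}, ic(s_i) whenever s_{i+1} = U(s_i), and s_{i+1} = U(s_i) infinitely often. -/
import Mathlib

open Classical in
/-- a terminating non-stuttering single-step loop cannot be made
non-terminating by interleaving stuttering steps, as long as a genuine update
step is taken infinitely often. -/
theorem stuttering_preserves_termination {S : Type*} (U : S → S) (ic : S → Prop)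
    (hU : ∀ s, U s ≠ s)
    (hterm : ¬ ∃ s : ℕ → S, ∀ i, s (i + 1) = U (s i) ∧ ic (s i)) :
    ¬ ∃ s : ℕ → S,
        (∀ i, s (i + 1) = s i ∨ s (i + 1) = U (s i)) ∧
        (∀ i, s (i + 1) = U (s i) → ic (s i)) ∧
        (∀ K, ∃ k, K ≤ k ∧ s (k + 1) = U (s k)) := by
  rintro ⟨s, h1, h2, h3⟩
  apply hterm
  -- constancy on stutter segments
  have const : ∀ a b, a ≤ b → (∀ j, a ≤ j → j < b → s (j + 1) = s j) → s b = s a := by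
    intro a b hab hst
    induction b with
    | zero => rw [Nat.le_zero.mp hab]
    | succ n ih =>
      rcases Nat.lt_or_ge a (n + 1) with h | h
      · have hn : a ≤ n := Nat.lt_succ_iff.mp h
        have := ih hn (fun j hj hj' => hst j hj (Nat.lt_succ_of_lt hj'))
        rw [hst n hn (Nat.lt_succ_self n), this]
      · have : a = n + 1 := le_antisymm hab h
        rw [this]
  -- indices of genuine steps
  have ex : ∀ K : ℕ, ∃ k, K ≤ k ∧ s (k + 1) = U (s k) := h3
  let g : ℕ → ℕ := fun n => Nat.rec (Nat.find (ex 0)) (fun _ p => Nat.find (ex (p + 1))) n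
  have hg0 : g 0 = Nat.find (ex 0) := rfl
  have hgs : ∀ n, g (n + 1) = Nat.find (ex (g n + 1)) := fun n => rfl
  have hgen : ∀ n, s (g n + 1) = U (s (g n)) := by
    intro n
    cases n with
    | zero => exact (Nat.find_spec (ex 0)).2
    | succ m => exact (Nat.find_spec (ex (g m + 1))).2
  have hmono : ∀ n, g n + 1 ≤ g (n + 1) := by
    intro n
    exact (Nat.find_spec (ex (g n + 1))).1
  -- between g n + 1 and g (n+1), all steps are stutters
  have hstut : ∀ n j, g n + 1 ≤ j → j < g (n + 1) → s (j + 1) = s j := by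
    intro n j hj hj'
    rw [hgs n] at hj'
    have := Nat.find_min (ex (g n + 1)) hj'
    push_neg at this
    rcases h1 j with h | h
    · exact h
    · exact absurd h (this hj)
  refine ⟨fun n => s (g n), fun i => ⟨?_, h2 (g i) (hgen i)⟩⟩
  have : s (g (i + 1)) = s (g i + 1) := const _ _ (hmono i) (hstut i)
  show s (g (i + 1)) = U (s (g i))
  rw [this, hgen i]
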